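/- arXiv:2101.06596 — 6 statements merged into one kernel-verified Lean document; each statement's English description precedes it below -/
import Mathlib

section
/- Any finite sequence of n integers can be partitioned into at most 2·⌈√n⌉ disjoint monotonic subsequences. -/
/-! Label each index `i` by the length of a longest monotone subsequence ending at `i`. If no
monotone subsequence has more than `k` terms, these labels take at most `k` values and each level
set is antitone, since `i < j` with `a i ≤ a j` would give `j` a larger label than `i` (Mirsky's
argument). Otherwise a monotone subsequence of more than `k` terms can be split off. With
`k = ⌈√n⌉ - 1` this happens at most `⌈√n⌉` times, so at most `2⌈√n⌉ - 1` parts are used. -/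

open Finset

section

variable {ι α : Type*} [PartialOrder ι] [LinearOrder α] (a : ι → α)

open Classical in
noncomputable def longestMonotoneEndingAt (s : Finset ι) (i : ι) : ℕ :=
  (s.powerset.filter fun t : Finset ι => IsGreatest (↑t : Set ι) i ∧ MonotoneOn a ↑t).sup card

variable {a}

theorem card_le_longestMonotoneEndingAt {s t : Finset ι} {i : ι} (hts : t ⊆ s)
    (hti : IsGreatest (↑t : Set ι) i) (ht : MonotoneOn a ↑t) :
    #t ≤ longestMonotoneEndingAt a s i := by
  classical
  exact le_sup (f := card) (mem_filter.mpr ⟨mem_powerset.mpr hts, hti, ht⟩)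

theorem exists_card_eq_longestMonotoneEndingAt {s : Finset ι} {i : ι} (hi : i ∈ s) :
    ∃ t ⊆ s, IsGreatest (↑t : Set ι) i ∧ MonotoneOn a ↑t ∧ #t = longestMonotoneEndingAt a s i := by
  classical
  have hne : ({i} : Finset ι) ∈ s.powerset.filter
      fun t : Finset ι => IsGreatest (↑t : Set ι) i ∧ MonotoneOn a ↑t := by
    simp [hi, isGreatest_singleton]
  obtain ⟨t, ht, hmax⟩ := exists_mem_eq_sup _ ⟨_, hne⟩ card
  rw [mem_filter, mem_powerset] at ht
  exact ⟨t, ht.1, ht.2.1, ht.2.2, by rw [longestMonotoneEndingAt, hmax]⟩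

theorem one_le_longestMonotoneEndingAt {s : Finset ι} {i : ι} (hi : i ∈ s) :
    1 ≤ longestMonotoneEndingAt a s i :=
  card_le_longestMonotoneEndingAt (t := {i}) (by simpa using hi) (by simp [isGreatest_singleton])
    (by simp)

theorem longestMonotoneEndingAt_le {s : Finset ι} {k : ℕ}
    (hs : ∀ t ⊆ s, MonotoneOn a ↑t → #t ≤ k) (i : ι) : longestMonotoneEndingAt a s i ≤ k := by
  classical
  refine Finset.sup_le fun t ht => ?_
  rw [mem_filter, mem_powerset] at ht
  exact hs t ht.1 ht.2.2

theorem longestMonotoneEndingAt_lt {s : Finset ι} {i j : ι} (hi : i ∈ s) (hj : j ∈ s) (hij : i < j)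
    (ha : a i ≤ a j) : longestMonotoneEndingAt a s i < longestMonotoneEndingAt a s j := by
  classical
  obtain ⟨t, hts, ⟨hit, hti⟩, hmono, hcard⟩ := exists_card_eq_longestMonotoneEndingAt (a := a) hi
  have hjt : j ∉ t := fun hjt => hij.not_ge (hti hjt)
  rw [← hcard, Nat.lt_iff_add_one_le, ← card_insert_of_notMem hjt]
  refine card_le_longestMonotoneEndingAt (insert_subset hj hts) ⟨mem_insert_self j t, ?_⟩ ?_
  · intro x hx
    rcases mem_insert.mp hx with rfl | hxt
    · exact le_rfl
    · exact (hti hxt).trans hij.le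
  · intro x hx y hy hxy
    rcases mem_insert.mp hx with rfl | hxt <;> rcases mem_insert.mp hy with rfl | hyt
    · exact le_rfl
    · exact absurd (hxy.trans (hti hyt)) hij.not_ge
    · exact (hmono hxt hit (hti hxt)).trans ha
    · exact hmono hxt hyt hxy

variable (a) in
theorem exists_monotoneOn_or_antitone_partition (s : Finset ι) (k : ℕ) :
    (∃ t ⊆ s, k < #t ∧ MonotoneOn a ↑t) ∨
      ∃ f : ι → ℕ, (∀ i ∈ s, f i < k) ∧ ∀ p, AntitoneOn a {i | i ∈ s ∧ f i = p} := by
  refine or_iff_not_imp_left.mpr fun hs => ⟨fun i => longestMonotoneEndingAt a s i - 1, ?_, ?_⟩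
  · have hle (i : ι) : longestMonotoneEndingAt a s i ≤ k :=
      longestMonotoneEndingAt_le (fun t hts hmono => not_lt.mp fun hk => hs ⟨t, hts, hk, hmono⟩) i
    intro i hi
    dsimp only
    have := one_le_longestMonotoneEndingAt (a := a) hi
    have := hle i
    omega
  rintro p i ⟨hi, rfl⟩ j ⟨hj, hij⟩ hle
  dsimp only at hij
  rcases hle.lt_or_eq with hlt | rfl
  · by_contra! ha
    have := one_le_longestMonotoneEndingAt (a := a) hi
    have := longestMonotoneEndingAt_lt hi hj hlt ha.le
    omega
  · exact le_rfl

variable (a) in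
def HasMonotonePartition (s : Finset ι) (m : ℕ) : Prop :=
  ∃ f : ι → ℕ, (∀ i ∈ s, f i < m) ∧
    ∀ p, MonotoneOn a {i | i ∈ s ∧ f i = p} ∨ AntitoneOn a {i | i ∈ s ∧ f i = p}

theorem HasMonotonePartition.mono {s : Finset ι} {m m' : ℕ} (h : HasMonotonePartition a s m)
    (hm : m ≤ m') : HasMonotonePartition a s m' :=
  let ⟨f, hf, hpart⟩ := h
  ⟨f, fun i hi => (hf i hi).trans_le hm, hpart⟩

theorem HasMonotonePartition.of_sdiff [DecidableEq ι] {s t : Finset ι} {m : ℕ}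
    (h : HasMonotonePartition a (s \ t) m) (hts : t ⊆ s) (ht : MonotoneOn a ↑t ∨ AntitoneOn a ↑t) :
    HasMonotonePartition a s (m + 1) := by
  obtain ⟨f, hf, hpart⟩ := h
  refine ⟨fun i => if i ∈ t then m else f i, fun i hi => ?_, fun p => ?_⟩
  · dsimp only
    split_ifs with hit
    · exact m.lt_succ_self
    · exact (hf i (mem_sdiff.mpr ⟨hi, hit⟩)).trans m.lt_succ_self
  by_cases hp : p = m
  · have hlevel : {i | i ∈ s ∧ (if i ∈ t then m else f i) = p} = ↑t := by
      ext i
      by_cases hit : i ∈ t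
      · simp [hit, hts hit, hp]
      · simpa [hit, hp] using fun hi => (hf i (mem_sdiff.mpr ⟨hi, hit⟩)).ne
    rwa [hlevel]
  · have hlevel : {i | i ∈ s ∧ (if i ∈ t then m else f i) = p} = {i | i ∈ s \ t ∧ f i = p} := by
      ext i
      by_cases hit : i ∈ t
      · simp [hit, Ne.symm hp]
      · simp [hit]
    rw [hlevel]
    exact hpart p

theorem hasMonotonePartition_of_card_le [DecidableEq ι] {s : Finset ι} {j k : ℕ}
    (hs : #s ≤ j * (k + 1)) : HasMonotonePartition a s (j + k) := by
  induction j generalizing s with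
  | zero =>
    obtain rfl : s = ∅ := card_eq_zero.mp (by simpa using hs)
    refine ⟨0, by simp, fun _ => .inl ?_⟩
    simpa using (Set.subsingleton_empty (α := ι)).monotoneOn a
  | succ j ih =>
    obtain ⟨t, hts, hkt, ht⟩ | ⟨f, hf, hpart⟩ := exists_monotoneOn_or_antitone_partition a s k
    · have hcard := card_sdiff_add_card_eq_card hts
      have hrest : #(s \ t) ≤ j * (k + 1) := by rw [add_mul] at hs; omega
      have := (ih hrest).of_sdiff hts (.inl ht)
      rwa [add_right_comm] at this
    · exact HasMonotonePartition.mono ⟨f, hf, fun p => .inr (hpart p)⟩ (by omega)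

end

theorem le_ceil_sqrt_mul_self (n : ℕ) : n ≤ ⌈Real.sqrt n⌉₊ * ⌈Real.sqrt n⌉₊ := by
  have h := (Real.sqrt_le_iff.mp (Nat.le_ceil (Real.sqrt n))).2
  rw [sq] at h
  exact_mod_cast h

theorem partition_into_monotone_subseqs (n : ℕ) (a : Fin n → ℤ) :
    ∃ (t : ℕ) (f : Fin n → Fin t), t ≤ 2 * ⌈Real.sqrt n⌉₊ ∧
      ∀ p : Fin t, MonotoneOn a {i | f i = p} ∨ AntitoneOn a {i | f i = p} := by
  set K := ⌈Real.sqrt n⌉₊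
  have hcard : #(univ : Finset (Fin n)) ≤ K * (K - 1 + 1) := by
    rw [card_univ, Fintype.card_fin]
    exact (le_ceil_sqrt_mul_self n).trans (Nat.mul_le_mul_left K (by omega))
  obtain ⟨f, hf, hpart⟩ := hasMonotonePartition_of_card_le (a := a) hcard
  refine ⟨K + (K - 1), fun i => ⟨f i, hf i (mem_univ i)⟩, by omega, fun p => ?_⟩
  simpa [Fin.ext_iff] using hpart p
end

section
/- Given a sequence of n k-tuples of integers, there exists a subsequence of length at least n^{(1/2)^k} (suitably floored) in which every one of the k coordinate sequences is monotonic. -/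
/-!
Erdős–Szekeres, with non-strict monotonicity. Label each `i ∈ s` by the size of the largest
monotone subset of `s` whose greatest element is `i`. If `i < j` carry the same label then
`f j < f i`, since otherwise `j` would extend a chain ending at `i`; so every label class is
antitone, and a largest subset `t` that is monotone or antitone satisfies `#s ≤ #t * #t`.
Applying this to one coordinate after another, each time inside the subset found so far,
squares the exponent once per coordinate.
-/

open Finset

section ErdosSzekeres

variable {ι α : Type*} [PartialOrder ι] [LinearOrder α] (f : ι → α) (s : Finset ι)

open scoped Classical in
noncomputable def monotoneChainsTo (i : ι) : Finset (Finset ι) :=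
  {t ∈ s.powerset | MonotoneOn f t ∧ IsGreatest (t : Set ι) i}

noncomputable def longestMonotoneChainTo (i : ι) : ℕ :=
  (monotoneChainsTo f s i).sup card

variable {f s}

lemma mem_monotoneChainsTo {i : ι} {t : Finset ι} :
    t ∈ monotoneChainsTo f s i ↔ t ⊆ s ∧ MonotoneOn f t ∧ IsGreatest (t : Set ι) i := by
  simp [monotoneChainsTo]

lemma singleton_mem_monotoneChainsTo {i : ι} (hi : i ∈ s) : {i} ∈ monotoneChainsTo f s i := by
  simp [mem_monotoneChainsTo, hi, isGreatest_singleton]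

lemma insert_mem_monotoneChainsTo [DecidableEq ι] {i j : ι} {t : Finset ι}
    (ht : t ∈ monotoneChainsTo f s i) (hj : j ∈ s) (hij : i < j) (hf : f i ≤ f j) :
    insert j t ∈ monotoneChainsTo f s j := by
  obtain ⟨hts, hmono, hi, hle⟩ := mem_monotoneChainsTo.1 ht
  refine mem_monotoneChainsTo.2 ⟨insert_subset hj hts, ?_, ?_⟩ <;> rw [coe_insert]
  · refine Set.monotoneOn_insert_iff.2 ⟨fun b hb _ => (hmono hb hi (hle hb)).trans hf,
      fun b hb hjb => absurd (hjb.trans (hle hb)) hij.not_ge, hmono⟩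
  · refine ⟨by simp, fun b hb => ?_⟩
    rcases Set.mem_insert_iff.1 hb with rfl | hb
    · exact le_rfl
    · exact (hle hb).trans hij.le

lemma one_le_longestMonotoneChainTo {i : ι} (hi : i ∈ s) : 1 ≤ longestMonotoneChainTo f s i :=
  le_sup (f := card) (singleton_mem_monotoneChainsTo (f := f) hi)

lemma longestMonotoneChainTo_le {r : ℕ} (hr : ∀ t ⊆ s, MonotoneOn f t → #t ≤ r) (i : ι) :
    longestMonotoneChainTo f s i ≤ r :=
  Finset.sup_le fun t ht => hr t (mem_monotoneChainsTo.1 ht).1 (mem_monotoneChainsTo.1 ht).2.1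

lemma longestMonotoneChainTo_lt {i j : ι} (hi : i ∈ s) (hj : j ∈ s) (hij : i < j)
    (hf : f i ≤ f j) : longestMonotoneChainTo f s i < longestMonotoneChainTo f s j := by
  classical
  obtain ⟨t, ht, hmax⟩ :=
    exists_mem_eq_sup _ ⟨_, singleton_mem_monotoneChainsTo (f := f) hi⟩ card
  have hjt : j ∉ t := fun hjt => hij.not_ge ((mem_monotoneChainsTo.1 ht).2.2.2 hjt)
  calc longestMonotoneChainTo f s i = #t := hmax
    _ < #(insert j t) := by rw [card_insert_of_notMem hjt]; exact Nat.lt_succ_self _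
    _ ≤ longestMonotoneChainTo f s j := le_sup (insert_mem_monotoneChainsTo ht hj hij hf)

lemma antitoneOn_filter_longestMonotoneChainTo_eq (ℓ : ℕ) :
    AntitoneOn f ({i ∈ s | longestMonotoneChainTo f s i = ℓ} : Finset ι) := by
  intro i hi j hj hij
  rw [coe_filter] at hi hj
  rcases hij.eq_or_lt with rfl | hij
  · exact le_rfl
  · by_contra! hf
    exact (longestMonotoneChainTo_lt hi.1 hj.1 hij hf.le).ne (hi.2.trans hj.2.symm)

theorem card_le_mul_of_monotoneOn_card_le_of_antitoneOn_card_le {r r' : ℕ}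
    (hmono : ∀ t ⊆ s, MonotoneOn f t → #t ≤ r) (hanti : ∀ t ⊆ s, AntitoneOn f t → #t ≤ r') :
    #s ≤ r' * r := by
  have hlabel (i : ι) (hi : i ∈ s) : longestMonotoneChainTo f s i ∈ Icc 1 r :=
    mem_Icc.2 ⟨one_le_longestMonotoneChainTo hi, longestMonotoneChainTo_le hmono i⟩
  calc #s ≤ r' * #(Icc 1 r) := card_le_mul_card_image_of_maps_to hlabel
        r' fun ℓ _ => hanti _ (filter_subset _ s) (antitoneOn_filter_longestMonotoneChainTo_eq ℓ)
    _ = r' * r := by rw [Nat.card_Icc, Nat.add_sub_cancel]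

theorem exists_subset_monotoneOn_or_antitoneOn_card_le_mul_self (f : ι → α) (s : Finset ι) :
    ∃ t ⊆ s, (MonotoneOn f t ∨ AntitoneOn f t) ∧ #s ≤ #t * #t := by
  classical
  obtain ⟨t, ht, hmax⟩ := Finset.exists_max_image
    ({t ∈ s.powerset | MonotoneOn f t ∨ AntitoneOn f t} : Finset (Finset ι)) card
    ⟨∅, by simp [MonotoneOn]⟩
  simp only [mem_filter, mem_powerset] at ht hmax
  refine ⟨t, ht.1, ht.2, card_le_mul_of_monotoneOn_card_le_of_antitoneOn_card_le (f := f) ?_ ?_⟩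
  · exact fun u hu h => hmax u ⟨hu, .inl h⟩
  · exact fun u hu h => hmax u ⟨hu, .inr h⟩

end ErdosSzekeres

theorem exists_subset_forall_monotoneOn_or_antitoneOn {ι κ α : Type*} [PartialOrder ι]
    [LinearOrder α] (a : ι → κ → α) (K : Finset κ) (s : Finset ι) :
    ∃ t ⊆ s, (∀ c ∈ K, MonotoneOn (a · c) t ∨ AntitoneOn (a · c) t) ∧ #s ≤ #t ^ 2 ^ #K := by
  classical
  induction K using Finset.induction_on with
  | empty => exact ⟨s, subset_rfl, by simp, by simp⟩
  | insert c K hc ih =>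
    obtain ⟨t, hts, hK, hst⟩ := ih
    obtain ⟨u, hut, hu, htu⟩ := exists_subset_monotoneOn_or_antitoneOn_card_le_mul_self (a · c) t
    refine ⟨u, hut.trans hts, ?_, ?_⟩
    · simp only [mem_insert, forall_eq_or_imp]
      exact ⟨hu, fun d hd => (hK d hd).imp (·.mono hut) (·.mono hut)⟩
    · calc #s ≤ #t ^ 2 ^ #K := hst
        _ ≤ (#u * #u) ^ 2 ^ #K := Nat.pow_le_pow_left htu _
        _ = #u ^ 2 ^ #(insert c K) := by rw [card_insert_of_notMem hc, pow_succ, pow_mul', sq]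

theorem tuples_monotone_subseq (n k : ℕ) (a : Fin n → (Fin k → ℤ)) :
    ∃ (m : ℕ) (σ : Fin m → Fin n), StrictMono σ ∧
      (∀ i : Fin k, Monotone (fun j => a (σ j) i) ∨ Antitone (fun j => a (σ j) i)) ∧
      n ≤ m ^ (2 ^ k) := by
  obtain ⟨t, -, ht, hn⟩ := exists_subset_forall_monotoneOn_or_antitoneOn a univ univ
  let σ := t.orderEmbOfFin rfl
  have hmem : ∀ j, σ j ∈ t := t.orderEmbOfFin_mem rfl
  refine ⟨#t, σ, σ.strictMono, fun i => ?_, by simpa using hn⟩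
  exact (ht i (mem_univ i)).imp
    (fun h _ _ hxy => h (hmem _) (hmem _) (σ.monotone hxy))
    (fun h _ _ hxy => h (hmem _) (hmem _) (σ.monotone hxy))
end

section
/- Let S be an ordered multiset of n integers with exactly c distinct values, n = k·c + 1, k ≥ 1, c a perfect square. Then S contains a monotonic subsequence of length at least max{√n, √c + n/c − 2}. -/
set_option maxHeartbeats 1000000
open Finset
open Finset

namespace MMS

variable {n : ℕ} (a : Fin n → ℤ) (r : ℤ → ℤ → Prop)

open Classical in
noncomputable def chainsEnd (j : Fin n) : Finset (Finset (Fin n)) :=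
  Finset.univ.filter (fun s => j ∈ s ∧ (∀ i ∈ s, i ≤ j) ∧
    ∀ i ∈ s, ∀ i' ∈ s, i < i' → r (a i) (a i'))

lemma mem_chainsEnd {j : Fin n} {s : Finset (Fin n)} :
    s ∈ chainsEnd a r j ↔ j ∈ s ∧ (∀ i ∈ s, i ≤ j) ∧
      ∀ i ∈ s, ∀ i' ∈ s, i < i' → r (a i) (a i') := by
  classical
  simp [chainsEnd]

lemma singleton_mem_chainsEnd (j : Fin n) : {j} ∈ chainsEnd a r j := by
  rw [mem_chainsEnd]
  refine ⟨mem_singleton_self j, ?_, ?_⟩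
  · intro i hi; rw [mem_singleton] at hi; exact hi.le
  · intro i hi i' hi' hlt
    rw [mem_singleton] at hi hi'
    subst hi; subst hi'; exact absurd hlt (lt_irrefl _)

noncomputable def len (j : Fin n) : ℕ := (chainsEnd a r j).sup Finset.card

lemma one_le_len (j : Fin n) : 1 ≤ len a r j := by
  have h := Finset.le_sup (f := Finset.card) (singleton_mem_chainsEnd a r j)
  rwa [Finset.card_singleton] at h

lemma exists_chain_card (j : Fin n) :
    ∃ s ∈ chainsEnd a r j, s.card = len a r j := by
  obtain ⟨s, hs, hcard⟩ := Finset.exists_mem_eq_sup (chainsEnd a r j)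
    ⟨{j}, singleton_mem_chainsEnd a r j⟩ Finset.card
  exact ⟨s, hs, hcard.symm⟩

lemma len_lt (htrans : ∀ x y z : ℤ, r x y → r y z → r x z)
    {i j : Fin n} (hij : i < j) (hr : r (a i) (a j)) :
    len a r i < len a r j := by
  obtain ⟨s, hs, hcard⟩ := exists_chain_card a r i
  rw [mem_chainsEnd] at hs
  obtain ⟨hmem, hle, hchain⟩ := hs
  have hjns : j ∉ s := fun h => absurd hij (not_lt.2 (hle j h))
  have h1 : insert j s ∈ chainsEnd a r j := by
    rw [mem_chainsEnd]
    refine ⟨mem_insert_self j s, ?_, ?_⟩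
    · intro i' hi'
      rcases mem_insert.1 hi' with h | h
      · exact h.le
      · exact (hle i' h).trans hij.le
    · intro i1 h1 i2 h2 hlt
      rcases mem_insert.1 h1 with e1 | e1
      · subst e1
        rcases mem_insert.1 h2 with e2 | e2
        · exact absurd hlt (by simp [e2])
        · exact absurd hlt (not_lt.2 ((hle i2 e2).trans hij.le))
      · rcases mem_insert.1 h2 with e2 | e2
        · subst e2
          rcases eq_or_lt_of_le (hle i1 e1) with h | h
          · rw [h]; exact hr
          · exact htrans _ _ _ (hchain i1 e1 i hmem h) hr
        · exact hchain i1 e1 i2 e2 hlt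
  have h2 := Finset.le_sup (f := Finset.card) h1
  rw [Finset.card_insert_of_notMem hjns, hcard] at h2
  exact Nat.lt_of_succ_le h2

noncomputable def XL : Fin n → ℕ := len a (fun x y => x ≤ y)
noncomputable def YL : Fin n → ℕ := len a (fun x y => y ≤ x)

lemma XL_lt {i j : Fin n} (hij : i < j) (h : a i ≤ a j) : XL a i < XL a j :=
  len_lt a (fun x y => x ≤ y) (fun _ _ _ h1 h2 => le_trans h1 h2) hij h

lemma YL_lt {i j : Fin n} (hij : i < j) (h : a j ≤ a i) : YL a i < YL a j :=
  len_lt a (fun x y => y ≤ x) (fun _ _ _ h1 h2 => le_trans h2 h1) hij h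

lemma one_le_XL (j : Fin n) : 1 ≤ XL a j := one_le_len a _ j
lemma one_le_YL (j : Fin n) : 1 ≤ YL a j := one_le_len a _ j

end MMS

theorem multiset_monotone_subseq_max (n c d k : ℕ) (hk : 1 ≤ k) (hc : c = d ^ 2)
    (hn : n = k * c + 1) (a : Fin n → ℤ)
    (hcard : (Finset.univ.image a).card = c) :
    ∃ (m : ℕ) (σ : Fin m → Fin n), StrictMono σ ∧
      (Monotone (a ∘ σ) ∨ Antitone (a ∘ σ)) ∧
      (m : ℝ) ≥ max (Real.sqrt n) (Real.sqrt c + (n : ℝ) / c - 2) := by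
  classical
  obtain ⟨k', rfl⟩ : ∃ k', k = k' + 1 := ⟨k - 1, by omega⟩
  have hn1 : 1 ≤ n := by omega
  have : Nonempty (Fin n) := ⟨⟨0, by omega⟩⟩
  have hc1 : 1 ≤ c := by
    have h1 : (Finset.univ.image a).Nonempty :=
      ⟨a ⟨0, by omega⟩, Finset.mem_image_of_mem a (mem_univ _)⟩
    have := Finset.card_pos.2 h1
    omega
  have hd1 : 1 ≤ d := by
    rcases Nat.eq_zero_or_pos d with h | h
    · subst h; simp at hc; omega
    · exact h
  set X := MMS.XL a with hXdef
  set Y := MMS.YL a with hYdef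
  set p := univ.sup X with hpdef
  set q := univ.sup Y with hqdef
  have hXp : ∀ j, X j ≤ p := fun j => Finset.le_sup (mem_univ j)
  have hYq : ∀ j, Y j ≤ q := fun j => Finset.le_sup (mem_univ j)
  have hX1 : ∀ j, 1 ≤ X j := MMS.one_le_XL a
  have hY1 : ∀ j, 1 ≤ Y j := MMS.one_le_YL a
  have pairinj : ∀ i j : Fin n, i < j → X i ≠ X j ∨ Y i ≠ Y j := by
    intro i j hij
    rcases le_total (a i) (a j) with h | h
    · exact Or.inl (Nat.ne_of_lt (MMS.XL_lt a hij h))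
    · exact Or.inr (Nat.ne_of_lt (MMS.YL_lt a hij h))
  -- Step A : n ≤ p * q
  have hA : n ≤ p * q := by
    have hmaps : ∀ j ∈ (univ : Finset (Fin n)),
        (X j, Y j) ∈ Finset.Icc 1 p ×ˢ Finset.Icc 1 q := by
      intro j _
      simp only [Finset.mem_product, Finset.mem_Icc]
      exact ⟨⟨hX1 j, hXp j⟩, hY1 j, hYq j⟩
    have hinj : Set.InjOn (fun j => (X j, Y j)) (univ : Finset (Fin n)) := by
      intro i _ j _ heq
      by_contra hne
      have heq' : X i = X j ∧ Y i = Y j :=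
        ⟨congrArg Prod.fst heq, congrArg Prod.snd heq⟩
      rcases lt_or_gt_of_ne (show i ≠ j from fun h => hne h) with h | h
      · rcases pairinj i j h with h' | h'
        · exact h' heq'.1
        · exact h' heq'.2
      · rcases pairinj j i h with h' | h'
        · exact h' heq'.1.symm
        · exact h' heq'.2.symm
    have := Finset.card_le_card_of_injOn _ hmaps hinj
    simpa [Nat.card_Icc] using this
  -- Step B : few positions with small min
  set T := univ.filter (fun j => min (X j) (Y j) < k' + 1) with hTdef
  have hB : T.card ≤ c * k' := by
    have hmaps : ∀ j ∈ T,
        (a j, min (X j) (Y j)) ∈ (Finset.univ.image a) ×ˢ Finset.Icc 1 k' := by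
      intro j hj
      rw [hTdef, Finset.mem_filter] at hj
      simp only [Finset.mem_product, Finset.mem_Icc]
      refine ⟨Finset.mem_image_of_mem a (mem_univ _), le_min (hX1 j) (hY1 j), by omega⟩
    have hinj : Set.InjOn (fun j => (a j, min (X j) (Y j))) (T : Set (Fin n)) := by
      intro i _ j _ heq
      by_contra hne
      have h1 : a i = a j := congrArg Prod.fst heq
      have h2 : min (X i) (Y i) = min (X j) (Y j) := congrArg Prod.snd heq
      rcases lt_or_gt_of_ne (show i ≠ j from fun h => hne h) with h | h
      · have hx := MMS.XL_lt a h (le_of_eq h1)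
        have hy := MMS.YL_lt a h (ge_of_eq h1)
        have hx' : X i < X j := hx
        have hy' : Y i < Y j := hy
        omega
      · have hx := MMS.XL_lt a h (le_of_eq h1.symm)
        have hy := MMS.YL_lt a h (ge_of_eq h1.symm)
        have hx' : X j < X i := hx
        have hy' : Y j < Y i := hy
        omega
    have := Finset.card_le_card_of_injOn _ hmaps hinj
    simpa [Nat.card_Icc, hcard] using this
  -- Step C : many positions with large min
  set S := univ.filter (fun j => k' + 1 ≤ X j ∧ k' + 1 ≤ Y j) with hSdef
  have hSC : c + 1 ≤ S.card := by
    have hcover : (univ : Finset (Fin n)) ⊆ S ∪ T := by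
      intro j _
      rw [Finset.mem_union, hSdef, hTdef, Finset.mem_filter, Finset.mem_filter]
      by_cases h : k' + 1 ≤ X j ∧ k' + 1 ≤ Y j
      · exact Or.inl ⟨mem_univ j, h⟩
      · exact Or.inr ⟨mem_univ j, by omega⟩
    have h1 : n ≤ S.card + T.card := by
      calc n = (univ : Finset (Fin n)).card := by simp
        _ ≤ (S ∪ T).card := Finset.card_le_card hcover
        _ ≤ S.card + T.card := Finset.card_union_le S T
    have h2 : n = c * k' + (c + 1) := by rw [hn]; ring
    linarith
  -- Step D : S injects into the top grid
  have hD : S.card ≤ (p + 1 - (k' + 1)) * (q + 1 - (k' + 1)) := by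
    have hmaps : ∀ j ∈ S, (X j, Y j) ∈ Finset.Icc (k' + 1) p ×ˢ Finset.Icc (k' + 1) q := by
      intro j hj
      rw [hSdef, Finset.mem_filter] at hj
      simp only [Finset.mem_product, Finset.mem_Icc]
      exact ⟨⟨hj.2.1, hXp j⟩, hj.2.2, hYq j⟩
    have hinj : Set.InjOn (fun j => (X j, Y j)) (S : Set (Fin n)) := by
      intro i _ j _ heq
      by_contra hne
      have heq' : X i = X j ∧ Y i = Y j :=
        ⟨congrArg Prod.fst heq, congrArg Prod.snd heq⟩
      rcases lt_or_gt_of_ne (show i ≠ j from fun h => hne h) with h | h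
      · rcases pairinj i j h with h' | h'
        · exact h' heq'.1
        · exact h' heq'.2
      · rcases pairinj j i h with h' | h'
        · exact h' heq'.1.symm
        · exact h' heq'.2.symm
    have := Finset.card_le_card_of_injOn _ hmaps hinj
    simpa [Nat.card_Icc] using this
  -- Step E : max p q ≥ d + k
  set m := max p q with hmdef
  have hpm : p ≤ m := le_max_left p q
  have hqm : q ≤ m := le_max_right p q
  have hE : d + (k' + 1) ≤ m := by
    have h1 : (p + 1 - (k' + 1)) * (q + 1 - (k' + 1)) ≤
        (m + 1 - (k' + 1)) * (m + 1 - (k' + 1)) :=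
      Nat.mul_le_mul (by omega) (by omega)
    have h2 : c + 1 ≤ (m + 1 - (k' + 1)) * (m + 1 - (k' + 1)) := by
      calc c + 1 ≤ S.card := hSC
        _ ≤ _ := hD
        _ ≤ _ := h1
    have h3 : d < m + 1 - (k' + 1) := by
      by_contra h
      push_neg at h
      have h4 := Nat.mul_le_mul h h
      have h5 : c = d * d := by rw [hc]; ring
      linarith
    omega
  -- Step F : m * m ≥ n
  have hF : n ≤ m * m := le_trans hA (Nat.mul_le_mul hpm hqm)
  -- real bounds
  have hm0 : (0:ℝ) ≤ (m:ℝ) := Nat.cast_nonneg m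
  have hr1 : Real.sqrt n ≤ (m:ℝ) := by
    have h1 : (n:ℝ) ≤ (m:ℝ) * (m:ℝ) := by exact_mod_cast hF
    calc Real.sqrt n ≤ Real.sqrt ((m:ℝ) * (m:ℝ)) := Real.sqrt_le_sqrt h1
      _ = (m:ℝ) := Real.sqrt_mul_self hm0
  have hr2 : Real.sqrt c + (n:ℝ) / c - 2 ≤ (m:ℝ) := by
    have hsq : Real.sqrt c = (d:ℝ) := by
      rw [hc]
      push_cast
      exact Real.sqrt_sq (Nat.cast_nonneg d)
    have hcPos : (0:ℝ) < (c:ℝ) := by exact_mod_cast hc1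
    have hdiv : (n:ℝ) / c ≤ (k' + 1 : ℕ) + 1 := by
      rw [div_le_iff₀ hcPos]
      have : (n:ℝ) = (k' + 1 : ℕ) * c + 1 := by exact_mod_cast congrArg (Nat.cast : ℕ → ℝ) hn
      rw [this]
      have hc1' : (1:ℝ) ≤ c := by exact_mod_cast hc1
      ring_nf
      nlinarith
    have hE' : (d:ℝ) + ((k' + 1 : ℕ) : ℝ) ≤ (m:ℝ) := by exact_mod_cast hE
    rw [hsq]
    push_cast at hdiv hE' ⊢
    linarith
  have hbound : max (Real.sqrt n) (Real.sqrt c + (n:ℝ) / c - 2) ≤ (m:ℝ) :=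
    max_le hr1 hr2
  -- construct the subsequence
  rcases le_total q p with hqp | hpq
  · -- nondecreasing, length p = m
    have hm : m = p := max_eq_left hqp
    obtain ⟨j0, _, hj0⟩ := Finset.exists_mem_eq_sup (univ : Finset (Fin n))
      Finset.univ_nonempty X
    obtain ⟨s, hs, hscard⟩ := MMS.exists_chain_card a (fun x y => x ≤ y) j0
    rw [MMS.mem_chainsEnd] at hs
    have hcardp : s.card = m := by
      rw [hm, hpdef, hj0]; exact hscard
    refine ⟨m, s.orderEmbOfFin hcardp, (s.orderEmbOfFin hcardp).strictMono, Or.inl ?_, hbound⟩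
    intro i i' hle
    rcases eq_or_lt_of_le hle with e | hlt
    · rw [e]
    · exact hs.2.2 _ (Finset.orderEmbOfFin_mem s hcardp i) _
        (Finset.orderEmbOfFin_mem s hcardp i')
        ((s.orderEmbOfFin hcardp).strictMono hlt)
  · -- nonincreasing, length q = m
    have hm : m = q := max_eq_right hpq
    obtain ⟨j0, _, hj0⟩ := Finset.exists_mem_eq_sup (univ : Finset (Fin n))
      Finset.univ_nonempty Y
    obtain ⟨s, hs, hscard⟩ := MMS.exists_chain_card a (fun x y => y ≤ x) j0
    rw [MMS.mem_chainsEnd] at hs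
    have hcardp : s.card = m := by
      rw [hm, hqdef, hj0]; exact hscard
    refine ⟨m, s.orderEmbOfFin hcardp, (s.orderEmbOfFin hcardp).strictMono, Or.inr ?_, hbound⟩
    intro i i' hle
    rcases eq_or_lt_of_le hle with e | hlt
    · rw [e]
    · exact hs.2.2 _ (Finset.orderEmbOfFin_mem s hcardp i) _
        (Finset.orderEmbOfFin_mem s hcardp i')
        ((s.orderEmbOfFin hcardp).strictMono hlt)
end

section
/- If any sequence of n elements (from some linearly ordered setting) contains a monotonic subsequence of length at least n^δ for a fixed 0 < δ < 1, then any sequence of length n can be partitioned into at most C(δ)·n^{1−δ} monotonic subsequences, where C(δ) = (3 − 2δ)/(1 − δ). -/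
/-!
Greedily remove a monotone-or-antitone subsequence of length `l ≥ M ^ δ` from the `M` indices
left. By Bernoulli's inequality this lowers the potential `M ^ (1 - δ)` by at least `1 - δ`, so at
most `n ^ (1 - δ) / (1 - δ)` parts are removed before nothing is left; and `1 ≤ 3 - 2δ`.
-/

open Finset

lemma rpow_sub_add_le_rpow {δ M l : ℝ} (hδ0 : 0 ≤ δ) (hδ1 : δ ≤ 1) (hM : 0 < M)
    (hl : M ^ δ ≤ l) (hlM : l ≤ M) :
    (M - l) ^ (1 - δ) + (1 - δ) ≤ M ^ (1 - δ) := by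
  have hratio : l / M ≤ 1 := (div_le_one hM).mpr hlM
  have hbernoulli : (1 + -(l / M)) ^ (1 - δ) ≤ 1 + (1 - δ) * -(l / M) :=
    rpow_one_add_le_one_add_mul_self (by linarith) (by linarith) (by linarith)
  have hsplit : (M - l) ^ (1 - δ) = M ^ (1 - δ) * (1 + -(l / M)) ^ (1 - δ) := by
    rw [← Real.mul_rpow hM.le (by linarith)]
    congr 1
    field_simp
    ring
  have hone : 1 ≤ M ^ (1 - δ) * (l / M) :=
    calc (1 : ℝ) = M ^ (1 - δ) * (M ^ δ / M) := by
          rw [mul_div_assoc', ← Real.rpow_add hM, sub_add_cancel, Real.rpow_one, div_self hM.ne']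
      _ ≤ M ^ (1 - δ) * (l / M) := by gcongr
  rw [hsplit]
  nlinarith [mul_le_mul_of_nonneg_left hbernoulli (Real.rpow_nonneg hM.le (1 - δ))]

lemma exists_cover_card_le {ι : Type*} [DecidableEq ι] (P : Finset ι → Prop) {δ : ℝ}
    (hδ0 : 0 ≤ δ) (hδ1 : δ ≤ 1)
    (hP : ∀ s : Finset ι, s.Nonempty → ∃ T ⊆ s, P T ∧ (#s : ℝ) ^ δ ≤ #T) (s : Finset ι) :
    ∃ C : Finset (Finset ι), (∀ T ∈ C, P T) ∧ (∀ i ∈ s, ∃ T ∈ C, i ∈ T) ∧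
      (#C : ℝ) * (1 - δ) ≤ (#s : ℝ) ^ (1 - δ) := by
  induction s using Finset.strongInduction with
  | H s ih =>
  rcases s.eq_empty_or_nonempty with rfl | hs
  · exact ⟨∅, by simp, by simp, by simp [Real.rpow_nonneg]⟩
  obtain ⟨T, hTs, hPT, hTcard⟩ := hP s hs
  have hTne : T.Nonempty := card_pos.mp <| by
    exact_mod_cast (Real.one_le_rpow (by exact_mod_cast hs.card_pos) hδ0).trans hTcard
  obtain ⟨C, hPC, hcover, hCcard⟩ := ih (s \ T) (Finset.sdiff_ssubset hTs hTne)
  refine ⟨insert T C, ?_, ?_, ?_⟩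
  · simpa [hPT] using hPC
  · intro i hi
    by_cases hiT : i ∈ T
    · exact ⟨T, mem_insert_self T C, hiT⟩
    · obtain ⟨U, hU, hiU⟩ := hcover i (mem_sdiff.mpr ⟨hi, hiT⟩)
      exact ⟨U, mem_insert_of_mem hU, hiU⟩
  · have hsdiff : (#(s \ T) : ℝ) = #s - #T := by
      rw [card_sdiff_of_subset hTs, Nat.cast_sub (card_le_card hTs)]
    have hdecrease := rpow_sub_add_le_rpow hδ0 hδ1 (by exact_mod_cast hs.card_pos) hTcard
      (by exact_mod_cast card_le_card hTs)
    have hinsert : (#(insert T C) : ℝ) ≤ #C + 1 := by exact_mod_cast card_insert_le T C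
    rw [hsdiff] at hCcard
    nlinarith

lemma exists_large_monotoneOn_or_antitoneOn_subset {ι α : Type*} [LinearOrder ι]
    [LinearOrder α] {δ : ℝ}
    (hext : ∀ (m : ℕ), 1 ≤ m → ∀ b : Fin m → α,
      ∃ (l : ℕ) (σ : Fin l → Fin m), StrictMono σ ∧
        (Monotone (b ∘ σ) ∨ Antitone (b ∘ σ)) ∧ (m : ℝ) ^ δ ≤ (l : ℝ))
    (a : ι → α) (s : Finset ι) (hs : s.Nonempty) :
    ∃ T ⊆ s, (MonotoneOn a T ∨ AntitoneOn a T) ∧ (#s : ℝ) ^ δ ≤ #T := by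
  let e := s.orderEmbOfFin rfl
  obtain ⟨l, σ, hσ, hmono, hl⟩ := hext #s hs.card_pos (a ∘ e)
  have hg : StrictMono (e ∘ σ) := e.strictMono.comp hσ
  refine ⟨univ.image (e ∘ σ), ?_, ?_, ?_⟩
  · rintro _ hi
    obtain ⟨j, -, rfl⟩ := mem_image.mp hi
    exact s.orderEmbOfFin_mem rfl (σ j)
  · rw [coe_image, coe_univ, Set.image_univ]
    refine hmono.imp (fun h => ?_) (fun h => ?_) <;>
      rintro _ ⟨i, rfl⟩ _ ⟨j, rfl⟩ hij <;> exact h (hg.le_iff_le.mp hij)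
  · rwa [card_image_of_injective _ hg.injective, card_univ, Fintype.card_fin]

lemma Finset.exists_index_of_cover {ι : Type*} [Fintype ι] (C : Finset (Finset ι))
    (hcover : ∀ i, ∃ T ∈ C, i ∈ T) :
    ∃ f : ι → Fin #C, ∀ i, i ∈ (C.equivFin.symm (f i) : Finset ι) := by
  choose T hTC hiT using hcover
  exact ⟨fun i => C.equivFin ⟨T i, hTC i⟩, fun i => by simpa using hiT i⟩

theorem partition_from_extraction {α : Type*} [LinearOrder α] (δ : ℝ)
    (hδ0 : 0 < δ) (hδ1 : δ < 1)
    (hext : ∀ (m : ℕ), 1 ≤ m → ∀ b : Fin m → α,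
      ∃ (l : ℕ) (σ : Fin l → Fin m), StrictMono σ ∧
        (Monotone (b ∘ σ) ∨ Antitone (b ∘ σ)) ∧ (m : ℝ) ^ δ ≤ (l : ℝ)) :
    ∀ (n : ℕ), (2 : ℝ) ^ (1 / δ) ≤ (n : ℝ) → ∀ a : Fin n → α,
      ∃ (t : ℕ) (f : Fin n → Fin t),
        (t : ℝ) ≤ (3 - 2 * δ) / (1 - δ) * (n : ℝ) ^ (1 - δ) ∧
        ∀ p : Fin t, MonotoneOn a {i | f i = p} ∨ AntitoneOn a {i | f i = p} := by
  intro n _ a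
  obtain ⟨C, hC, hcover, hcard⟩ := exists_cover_card_le _ hδ0.le hδ1.le
    (exists_large_monotoneOn_or_antitoneOn_subset hext a) univ
  obtain ⟨f, hf⟩ := C.exists_index_of_cover fun i => hcover i (mem_univ i)
  refine ⟨#C, f, ?_, fun p => ?_⟩
  · rw [card_univ, Fintype.card_fin] at hcard
    have hpos : 0 < 1 - δ := by linarith
    calc (#C : ℝ) ≤ (n : ℝ) ^ (1 - δ) / (1 - δ) := by rwa [le_div_iff₀ hpos]
      _ ≤ (3 - 2 * δ) / (1 - δ) * (n : ℝ) ^ (1 - δ) := by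
        rw [div_mul_eq_mul_div]
        gcongr
        nlinarith [Real.rpow_nonneg (Nat.cast_nonneg n) (1 - δ)]
  · have hfiber : {i | f i = p} ⊆ (C.equivFin.symm p : Finset (Fin n)) := by
      rintro i rfl
      exact hf i
    exact (hC _ (C.equivFin.symm p).2).imp (·.mono hfiber) (·.mono hfiber)
end

section
/- Any sequence of n pairs of integers can be partitioned into O(n^{3/4}) monotonic subsequences; concretely, into at most 10·⌈n^{3/4}⌉ parts, where in each part both coordinate sequences are monotonic. -/
/-!
By Erdős–Szekeres, applied once to each coordinate, among more than `k ^ 4` pairs there are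
`k + 1` on which both coordinates are monotonic. Removing such chains greedily brings a set of
at most `(k + 1) ^ 4` indices down to `k ^ 4` indices after at most `4 k ^ 2 + 2 k + 2` steps.
As `2 k ^ 3 + 4 k ^ 2 + 2 k + 2 ≤ 2 (k + 1) ^ 3`, induction on `k` splits any `k ^ 4` indices
into `2 k ^ 3` such chains, and `k = ⌈n ^ (1/4)⌉` gives the bound.
-/

open Finset

variable {ι α β : Type*}

def MonotoneOrAntitoneOn [Preorder ι] [Preorder β] (f : ι → β) (s : Set ι) : Prop :=
  MonotoneOn f s ∨ AntitoneOn f s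

theorem MonotoneOrAntitoneOn.mono [Preorder ι] [Preorder β] {f : ι → β} {s t : Set ι}
    (h : MonotoneOrAntitoneOn f t) (hst : s ⊆ t) : MonotoneOrAntitoneOn f s :=
  h.imp (·.mono hst) (·.mono hst)

section ErdosSzekeres

variable [LinearOrder ι] [LinearOrder β]

noncomputable def monotoneChainsEndingAt (b : ι → β) (S : Finset ι) (i : ι) : Finset (Finset ι) :=
  open Classical in
  S.powerset.filter fun c => IsGreatest (c : Set ι) i ∧ MonotoneOn b c

noncomputable def monotoneChainLength (b : ι → β) (S : Finset ι) (i : ι) : ℕ :=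
  (monotoneChainsEndingAt b S i).sup card

variable {b : ι → β} {S c : Finset ι} {i j : ι}

theorem mem_monotoneChainsEndingAt :
    c ∈ monotoneChainsEndingAt b S i ↔ c ⊆ S ∧ IsGreatest (c : Set ι) i ∧ MonotoneOn b c := by
  simp [monotoneChainsEndingAt]

theorem singleton_mem_monotoneChainsEndingAt (hi : i ∈ S) :
    {i} ∈ monotoneChainsEndingAt b S i :=
  mem_monotoneChainsEndingAt.2 ⟨by simpa using hi, by simp, by simp⟩

theorem one_le_monotoneChainLength (hi : i ∈ S) : 1 ≤ monotoneChainLength b S i :=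
  le_sup (f := card) (singleton_mem_monotoneChainsEndingAt hi)

theorem monotoneChainLength_le {k : ℕ} (h : ∀ c ⊆ S, MonotoneOn b c → #c ≤ k) :
    monotoneChainLength b S i ≤ k :=
  Finset.sup_le fun c hc =>
    h c (mem_monotoneChainsEndingAt.1 hc).1 (mem_monotoneChainsEndingAt.1 hc).2.2

theorem monotoneChainLength_lt (hi : i ∈ S) (hj : j ∈ S) (hij : i < j) (hb : b i ≤ b j) :
    monotoneChainLength b S i < monotoneChainLength b S j := by
  obtain ⟨c, hc, hcard⟩ :=
    exists_mem_eq_sup _ ⟨_, singleton_mem_monotoneChainsEndingAt (b := b) hi⟩ card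
  obtain ⟨hcS, ⟨hic, hci⟩, hmono⟩ := mem_monotoneChainsEndingAt.1 hc
  have hjc : j ∉ c := fun h => (hci h).not_gt hij
  have hchain : insert j c ∈ monotoneChainsEndingAt b S j := by
    refine mem_monotoneChainsEndingAt.2 ⟨insert_subset hj hcS, ?_, ?_⟩ <;> rw [coe_insert]
    · exact ⟨Set.mem_insert _ _, Set.insert_subset_iff.2 ⟨le_rfl, fun p hp => (hci hp).trans hij.le⟩⟩
    · exact Set.monotoneOn_insert_iff.2 ⟨fun p hp _ => (hmono hp hic (hci hp)).trans hb,
        fun p hp hjp => absurd ((hci hp).trans_lt hij) hjp.not_gt, hmono⟩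
  calc monotoneChainLength b S i = #c := hcard
    _ < #(insert j c) := by rw [card_insert_of_notMem hjc]; omega
    _ ≤ monotoneChainLength b S j := le_sup hchain

/-- Erdős–Szekeres. -/
theorem exists_subset_lt_card_monotoneOrAntitoneOn (b : ι → β) {S : Finset ι} {k : ℕ}
    (h : k * k < #S) : ∃ c ⊆ S, k < #c ∧ MonotoneOrAntitoneOn b c := by
  by_contra! hS
  have hmaps : ∀ i ∈ S, monotoneChainLength b S i ∈ Icc 1 k := fun i hi =>
    mem_Icc.2 ⟨one_le_monotoneChainLength hi, monotoneChainLength_le fun c hcS hc =>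
      not_lt.1 fun hk => hS c hcS hk (Or.inl hc)⟩
  -- `monotoneChainLength` strictly increases along any non-decreasing step, so `b` is
  -- antitone on each of its fibres.
  obtain ⟨y, -, hy⟩ := exists_lt_card_fiber_of_mul_lt_card_of_maps_to hmaps (by simpa using h)
  refine hS _ (filter_subset _ _) hy (Or.inr fun i hi j hj hij => ?_)
  simp only [coe_filter] at hi hj
  rcases hij.lt_or_eq with hij | rfl
  · by_contra! hb
    exact (monotoneChainLength_lt hi.1 hj.1 hij hb.le).ne (hi.2.trans hj.2.symm)
  · rfl

end ErdosSzekeres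

theorem exists_subset_lt_card_monotoneOrAntitoneOn_fst_snd [LinearOrder ι]
    [LinearOrder α] [LinearOrder β] (a : ι → α × β) {S : Finset ι} {k : ℕ} (h : k ^ 4 < #S) :
    ∃ c ⊆ S, k < #c ∧ MonotoneOrAntitoneOn (fun i => (a i).1) c ∧
      MonotoneOrAntitoneOn (fun i => (a i).2) c := by
  obtain ⟨c₁, hc₁S, hc₁, hmono₁⟩ :=
    exists_subset_lt_card_monotoneOrAntitoneOn (fun i => (a i).1) (k := k ^ 2) (by linarith)
  obtain ⟨c₂, hc₂, hk, hmono₂⟩ :=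
    exists_subset_lt_card_monotoneOrAntitoneOn (fun i => (a i).2) (k := k) (by nlinarith)
  exact ⟨c₂, hc₂.trans hc₁S, hk, hmono₁.mono (coe_subset.2 hc₂), hmono₂⟩

section Greedy

variable [DecidableEq α] {P : Finset α → Prop}

theorem exists_finpartition_card_le_add {m ℓ g : ℕ}
    (hsmall : ∀ R : Finset α, #R ≤ m → ∃ Q : Finpartition R, #Q.parts ≤ g ∧ ∀ c ∈ Q.parts, P c)
    (hlarge : ∀ T : Finset α, m < #T → ∃ c ⊆ T, ℓ ≤ #c ∧ P c) (r : ℕ) {S : Finset α}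
    (hS : #S ≤ m + ℓ * r) : ∃ Q : Finpartition S, #Q.parts ≤ g + r ∧ ∀ c ∈ Q.parts, P c := by
  induction r generalizing S with
  | zero => simpa using hsmall S (by simpa using hS)
  | succ r ih =>
    by_cases hSm : #S ≤ m
    · obtain ⟨Q, hQ, hPQ⟩ := hsmall S hSm
      exact ⟨Q, by omega, hPQ⟩
    obtain ⟨c, hcS, hℓc, hPc⟩ := hlarge S (by omega)
    rw [mul_add_one] at hS
    have hc : c.Nonempty := by
      rw [← card_pos]
      rcases ℓ.eq_zero_or_pos with rfl | hℓ
      · simp only [zero_mul, add_zero] at hS; omega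
      · omega
    obtain ⟨Q, hQ, hPQ⟩ := ih (S := S \ c) (by rw [card_sdiff_of_subset hcS]; omega)
    refine ⟨Q.extend hc.ne_empty sdiff_disjoint (sdiff_union_of_subset hcS), ?_, ?_⟩
    · rw [Finpartition.card_extend]
      omega
    · intro d hd
      rw [Finpartition.extend_parts, mem_insert] at hd
      rcases hd with rfl | hd
      exacts [hPc, hPQ d hd]

theorem exists_finpartition_card_le_two_mul_pow_three
    (hP : ∀ (k : ℕ) (T : Finset α), k ^ 4 < #T → ∃ c ⊆ T, k < #c ∧ P c) (k : ℕ) {S : Finset α}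
    (hS : #S ≤ k ^ 4) : ∃ Q : Finpartition S, #Q.parts ≤ 2 * k ^ 3 ∧ ∀ c ∈ Q.parts, P c := by
  induction k generalizing S with
  | zero =>
    obtain rfl : S = ∅ := by simpa using hS
    exact ⟨⊥, by simp, by simp⟩
  | succ k ih =>
    -- `4 k ^ 2 + 2 k + 2` is the least `r` with `(k + 1) ^ 4 ≤ k ^ 4 + (k + 1) * r`.
    obtain ⟨Q, hQ, hPQ⟩ := exists_finpartition_card_le_add (ℓ := k + 1) (fun R hR => ih hR)
      (fun T hT => hP k T hT) (4 * k ^ 2 + 2 * k + 2) (hS.trans (by nlinarith))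
    exact ⟨Q, hQ.trans (by nlinarith), hPQ⟩

end Greedy

theorem Finpartition.exists_fin_coloring [Fintype ι] [DecidableEq ι]
    (Q : Finpartition (univ : Finset ι)) :
    ∃ f : ι → Fin #Q.parts, ∀ p, ∃ c ∈ Q.parts, {i | f i = p} ⊆ (c : Set ι) := by
  refine ⟨fun i => Q.parts.equivFin ⟨Q.part i, Q.part_mem.2 (mem_univ i)⟩,
    fun p => ⟨_, (Q.parts.equivFin.symm p).2, fun i hi => ?_⟩⟩
  subst hi
  rw [Equiv.symm_apply_apply]
  exact Q.mem_part (mem_univ i)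

theorem rpow_one_div_four_pow {x : ℝ} (hx : 0 ≤ x) (m : ℕ) :
    (x ^ ((1 : ℝ) / 4)) ^ m = x ^ ((m : ℝ) / 4) := by
  rw [← Real.rpow_natCast, ← Real.rpow_mul hx]
  ring_nf

theorem le_ceil_rpow_one_div_four_pow_four (n : ℕ) : n ≤ ⌈(n : ℝ) ^ ((1 : ℝ) / 4)⌉₊ ^ 4 := by
  have h : (n : ℝ) ≤ (⌈(n : ℝ) ^ ((1 : ℝ) / 4)⌉₊ : ℝ) ^ 4 :=
    calc (n : ℝ) = ((n : ℝ) ^ ((1 : ℝ) / 4)) ^ 4 := by rw [rpow_one_div_four_pow n.cast_nonneg]; norm_num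
      _ ≤ _ := pow_le_pow_left₀ (by positivity) (Nat.le_ceil _) 4
  exact_mod_cast h

theorem two_mul_ceil_rpow_one_div_four_pow_three_le (n : ℕ) :
    2 * ⌈(n : ℝ) ^ ((1 : ℝ) / 4)⌉₊ ^ 3 ≤ 10 * ⌈(n : ℝ) ^ ((3 : ℝ) / 4)⌉₊ := by
  set x := (n : ℝ) ^ ((1 : ℝ) / 4)
  have hx : 0 ≤ x := by positivity
  by_cases hk : ⌈x⌉₊ = 0
  · simp [hk]
  obtain ⟨m, hm⟩ := Nat.exists_eq_add_one_of_ne_zero hk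
  -- From `m < x` we get `m ^ 3 < ⌈x ^ 3⌉₊`, and `(m + 1) ^ 3 ≤ 5 * (m ^ 3 + 1)`.
  have hmx : (m : ℝ) < x := by
    have := Nat.ceil_lt_add_one hx
    rw [hm] at this
    push_cast at this
    linarith
  have hm3 : m ^ 3 < ⌈(n : ℝ) ^ ((3 : ℝ) / 4)⌉₊ := by
    have hx3 : (n : ℝ) ^ ((3 : ℝ) / 4) = x ^ 3 := by rw [rpow_one_div_four_pow n.cast_nonneg]; norm_num
    rw [← Nat.cast_lt (α := ℝ), hx3]
    push_cast
    exact (pow_lt_pow_left₀ hmx (by positivity) (by norm_num)).trans_le (Nat.le_ceil _)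
  have hcube : (m + 1) ^ 3 ≤ 5 * (m ^ 3 + 1) := by
    rcases m.lt_or_ge 2 with h | h
    · interval_cases m <;> norm_num
    · nlinarith [Nat.mul_le_mul_right (m ^ 2) h, Nat.mul_le_mul_right m h]
  rw [hm]
  omega

theorem partition_pairs (n : ℕ) (a : Fin n → ℤ × ℤ) :
    ∃ (t : ℕ) (f : Fin n → Fin t), t ≤ 10 * ⌈(n : ℝ) ^ ((3 : ℝ) / 4)⌉₊ ∧
      ∀ p : Fin t,
        (MonotoneOn (fun i => (a i).1) {i | f i = p} ∨
          AntitoneOn (fun i => (a i).1) {i | f i = p}) ∧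
        (MonotoneOn (fun i => (a i).2) {i | f i = p} ∨
          AntitoneOn (fun i => (a i).2) {i | f i = p}) := by
  classical
  obtain ⟨Q, hQcard, hQ⟩ := exists_finpartition_card_le_two_mul_pow_three
    (fun _ _ hT => exists_subset_lt_card_monotoneOrAntitoneOn_fst_snd a hT)
    ⌈(n : ℝ) ^ ((1 : ℝ) / 4)⌉₊ (S := univ) (by simpa using le_ceil_rpow_one_div_four_pow_four n)
  obtain ⟨f, hf⟩ := Q.exists_fin_coloring
  refine ⟨_, f, hQcard.trans (two_mul_ceil_rpow_one_div_four_pow_three_le n), fun p => ?_⟩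
  obtain ⟨c, hc, hpc⟩ := hf p
  exact ⟨(hQ c hc).1.mono hpc, (hQ c hc).2.mono hpc⟩
end

section
/- Iterated subsequence extraction: if every sequence of length m over a linear order α has a monotone-or-antitone subsequence of length ≥ √m (rounded down), then every sequence of length n of k-tuples over α has a subsequence of length ≥ n^{1/2^k} (appropriately floored via iterated Nat.sqrt) that is monotone-or-antitone in each coordinate. -/
theorem iterated_extraction {α : Type*} [LinearOrder α]
    (hext : ∀ (m : ℕ) (b : Fin m → α),
      ∃ σ : Fin (Nat.sqrt m) → Fin m, StrictMono σ ∧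
        (Monotone (b ∘ σ) ∨ Antitone (b ∘ σ)))
    (n k : ℕ) (a : Fin n → (Fin k → α)) :
    ∃ σ : Fin (Nat.sqrt^[k] n) → Fin n, StrictMono σ ∧
      ∀ i : Fin k, Monotone (fun j => a (σ j) i) ∨ Antitone (fun j => a (σ j) i) := by
  induction k generalizing n with
  | zero =>
    exact ⟨id, strictMono_id, fun i => i.elim0⟩
  | succ k ih =>
    obtain ⟨σ₀, hσ₀, hmono⟩ := hext n (fun j => a j 0)
    obtain ⟨τ, hτ, hτm⟩ := ih (Nat.sqrt n) (fun j i => a (σ₀ j) i.succ)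
    refine ⟨fun j => σ₀ (τ j), hσ₀.comp hτ, fun i => ?_⟩
    refine Fin.cases ?_ ?_ i
    · rcases hmono with h | h
      · exact Or.inl (h.comp hτ.monotone)
      · exact Or.inr (h.comp_monotone hτ.monotone)
    · intro i'
      exact hτm i'
end
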